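/- Let x_1,...,x_m be points in a metric space (Y, d) and θ_0 ∈ Y. If strictly more than half of the points satisfy d(x_j, θ_0) ≤ ε, then the metric median x* = med_0(x_1,...,x_m) satisfies d(x*, θ_0) ≤ 3ε. -/

import Mathlib

/-- `xstar` is a metric median (`med₀`) of `x_1, ..., x_m`: it is one of the
points, and it is a minimax center in the sense that whenever some point `x j`
has more than half of the points within distance `2ε`, so does `xstar`. -/
def IsMetricMedian {Y : Type*} [MetricSpace Y] {m : ℕ} (x : Fin m → Y) (xstar : Y) : Prop :=
  (∃ j₀ : Fin m, xstar = x j₀) ∧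
  ∀ ε > (0 : ℝ),
    (∃ j : Fin m, m < 2 * (Finset.univ.filter fun i => dist (x i) (x j) ≤ 2 * ε).card) →
      m < 2 * (Finset.univ.filter fun i => dist (x i) xstar ≤ 2 * ε).card

/-! The points within `ε` of `θ₀` form a majority, so some `x j` among them has a majority
within `2ε`; by minimality the median `x*` has one too, and two majorities share a point `x i`,
whence `d(x*, θ₀) ≤ d(x*, x i) + d(x i, θ₀) ≤ 2ε + ε`. -/

open Finset

theorem Finset.inter_nonempty_of_card_lt_two_mul_card {ι : Type*} [Fintype ι] [DecidableEq ι]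
    {s t : Finset ι}
    (hs : Fintype.card ι < 2 * #s) (ht : Fintype.card ι < 2 * #t) : (s ∩ t).Nonempty :=
  inter_nonempty_of_card_lt_card_add_card (subset_univ s) (subset_univ t)
    (by rw [card_univ]; omega)

theorem filter_dist_le_subset_filter_dist_le_two_mul {ι Y : Type*} [Fintype ι]
    [PseudoMetricSpace Y] (x : ι → Y) {a c : Y} {r : ℝ} (hc : dist c a ≤ r) :
    (univ.filter fun i => dist (x i) a ≤ r) ⊆ univ.filter fun i => dist (x i) c ≤ 2 * r := by
  intro i hi
  rw [mem_filter] at hi ⊢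
  refine ⟨mem_univ i, ?_⟩
  calc dist (x i) c ≤ dist (x i) a + dist c a := dist_triangle_right _ _ _
    _ ≤ 2 * r := by linarith [hi.2]

/-- If strictly more than half of the points `x_1, ..., x_m` lie within distance
`ε` of `θ₀`, then the metric median is within distance `3ε` of `θ₀`. -/
theorem metric_median_close
    {Y : Type*} [MetricSpace Y] {m : ℕ} (x : Fin m → Y) (xstar : Y)
    (hmed : IsMetricMedian x xstar) (θ₀ : Y) (ε : ℝ) (hε : 0 < ε)
    (hmaj : m < 2 * (Finset.univ.filter fun j => dist (x j) θ₀ ≤ ε).card) :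
    dist xstar θ₀ ≤ 3 * ε := by
  set S : Finset (Fin m) := {j | dist (x j) θ₀ ≤ ε}
  obtain ⟨j, hj⟩ : S.Nonempty := card_pos.mp (by omega)
  have hmaj_j : m < 2 * #({i | dist (x i) (x j) ≤ 2 * ε} : Finset (Fin m)) :=
    hmaj.trans_le <| Nat.mul_le_mul_left 2 <| card_le_card <|
      filter_dist_le_subset_filter_dist_le_two_mul x (mem_filter.mp hj).2
  have hmaj_star := hmed.2 ε hε ⟨j, hmaj_j⟩
  obtain ⟨i, hi⟩ := inter_nonempty_of_card_lt_two_mul_card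
    (s := S) (by simpa using hmaj) (by simpa using hmaj_star)
  obtain ⟨hiθ, histar⟩ : dist (x i) θ₀ ≤ ε ∧ dist (x i) xstar ≤ 2 * ε := by
    simp only [S, mem_inter, mem_filter] at hi
    exact ⟨hi.1.2, hi.2.2⟩
  calc dist xstar θ₀ ≤ dist (x i) xstar + dist (x i) θ₀ := dist_triangle_left _ _ _
    _ ≤ 3 * ε := by linarith
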